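/- arXiv:1510.00052 — 3 statements merged into one kernel-verified Lean document; each statement's English description precedes it below -/
import Mathlib

section
/- Unisolvency of the rotated-Q1 immersed finite element with edge-mean (integral-value) degrees of freedom on a Type II interface element: for every β⁻, β⁺ > 0, every d, e ∈ (0,1), and every (v₁,v₂,v₃,v₄) ∈ ℝ⁴, there exists a unique pair of coefficient vectors (c⁻, c⁺) ∈ ℝ⁴ × ℝ⁴ such that the associated piecewise rotated-Q1 function φ satisfies the jump conditions (J1)–(J3) and its four edge-mean degrees of freedom equal v₁, v₂, v₃, v₄ respectively. -/
open MeasureTheory Set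

noncomputable section

/-- The rotated-Q1 polynomial `c₁ + c₂ x + c₃ y + c₄ (x² − y²)` with coefficient
vector `c = (c 0, c 1, c 2, c 3)`. -/
def rq1 (c : Fin 4 → ℝ) (x y : ℝ) : ℝ :=
  c 0 + c 1 * x + c 2 * y + c 3 * (x ^ 2 - y ^ 2)

/-- The piecewise rotated-Q1 function on the reference Type II interface element:
`p⁻` where `x ≤ d + (e − d) y`, `p⁺` elsewhere. -/
def phiFn (d e : ℝ) (cm cp : Fin 4 → ℝ) (x y : ℝ) : ℝ :=
  if x ≤ d + (e - d) * y then rq1 cm x y else rq1 cp x y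

/-- Jump condition (J1): continuity at the interface points `D = (d,0)` and `E = (e,1)`. -/
def J1 (d e : ℝ) (cm cp : Fin 4 → ℝ) : Prop :=
  rq1 cm d 0 = rq1 cp d 0 ∧ rq1 cm e 1 = rq1 cp e 1

/-- Jump condition (J2): matching of the `x² − y²` coefficients. -/
def J2 (cm cp : Fin 4 → ℝ) : Prop := cm 3 = cp 3

/-- The flux defect `∫₀¹ (β⁺∇p⁺ − β⁻∇p⁻)((1−t)d + te, t) · (1, d − e) dt`. -/
def fluxDefect (βm βp d e : ℝ) (cm cp : Fin 4 → ℝ) : ℝ :=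
  ∫ t in (0:ℝ)..1,
    ((βp * (cp 1 + 2 * cp 3 * ((1 - t) * d + t * e))
        - βm * (cm 1 + 2 * cm 3 * ((1 - t) * d + t * e))) * 1
      + (βp * (cp 2 - 2 * cp 3 * t) - βm * (cm 2 - 2 * cm 3 * t)) * (d - e))

/-- Jump condition (J3): the integral over `DE` of the jump of the normal flux vanishes. -/
def J3 (βm βp d e : ℝ) (cm cp : Fin 4 → ℝ) : Prop :=
  fluxDefect βm βp d e cm cp = 0

/-- The four edge-mean (integral-value) degrees of freedom of `φ`:
bottom, right, top, left edges of `T = [0,1]²`. -/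
def dofI (d e : ℝ) (cm cp : Fin 4 → ℝ) : Fin 4 → ℝ :=
  ![(∫ x in (0:ℝ)..d, rq1 cm x 0) + ∫ x in d..(1:ℝ), rq1 cp x 0,
    ∫ y in (0:ℝ)..1, rq1 cp 1 y,
    (∫ x in (0:ℝ)..e, rq1 cm x 1) + ∫ x in e..(1:ℝ), rq1 cp x 1,
    ∫ y in (0:ℝ)..1, rq1 cm 0 y]

/-- The four midpoint-value degrees of freedom of `φ`:
values at the midpoints of the bottom, right, top, left edges of `T = [0,1]²`. -/
def dofP (d e : ℝ) (cm cp : Fin 4 → ℝ) : Fin 4 → ℝ :=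
  ![phiFn d e cm cp (1/2) 0, phiFn d e cm cp 1 (1/2),
    phiFn d e cm cp (1/2) 1, phiFn d e cm cp 0 (1/2)]

/-- The partial derivative `∂ₓᵃ∂ᵧᵇ` of the rotated-Q1 polynomial with coefficients `c`. -/
def rq1D (c : Fin 4 → ℝ) : ℕ → ℕ → ℝ → ℝ → ℝ
  | 0, 0, x, y => rq1 c x y
  | 1, 0, x, _ => c 1 + 2 * c 3 * x
  | 0, 1, _, y => c 2 - 2 * c 3 * y
  | 2, 0, _, _ => 2 * c 3
  | 1, 1, _, _ => 0
  | 0, 2, _, _ => -(2 * c 3)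
  | _, _, _, _ => 0


/-!
(J1)–(J3) and the edge means are eight linear conditions on the eight coefficients, so it suffices
that zero data force `c⁻ = c⁺ = 0`. By (J1) and (J2), `p⁺ − p⁻` is affine and vanishes at `D` and
`E`, so it is `l (x − d − (e − d) y)` for some `l`. Vanishing edge means then fix `p⁻` in terms of
`l`, which turns the flux defect into `l (β⁺ w(d,e) + β⁻ w(1−d,1−e)) / 4` for a cubic `w` positive
on `(0,1)²`. Hence `l = 0`, and then `p⁻ = p⁺ = 0` by unisolvency of the rotated-Q1 edge means.
-/

theorem integral_quadratic (p q r a b : ℝ) :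
    ∫ x in a..b, (p + q * x + r * x ^ 2) =
      p * (b - a) + q * (b ^ 2 - a ^ 2) / 2 + r * (b ^ 3 - a ^ 3) / 3 := by
  have hderiv : ∀ x ∈ uIcc a b,
      HasDerivAt (fun y : ℝ => p * y + q * (y ^ 2 / 2) + r * (y ^ 3 / 3))
        (p + q * x + r * x ^ 2) x := fun x _ => by
    refine ((((hasDerivAt_id x).const_mul p).add (((hasDerivAt_pow 2 x).div_const 2).const_mul
      q)).add (((hasDerivAt_pow 3 x).div_const 3).const_mul r)).congr_deriv ?_
    ring
  have hcont : Continuous fun x : ℝ => p + q * x + r * x ^ 2 := by fun_prop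
  rw [intervalIntegral.integral_eq_sub_of_hasDerivAt hderiv (hcont.intervalIntegrable a b)]
  ring

theorem integral_rq1_horizontal (c : Fin 4 → ℝ) (y a b : ℝ) :
    ∫ x in a..b, rq1 c x y =
      (c 0 + c 2 * y - c 3 * y ^ 2) * (b - a) + c 1 * (b ^ 2 - a ^ 2) / 2
        + c 3 * (b ^ 3 - a ^ 3) / 3 := by
  simp_rw [rq1, show ∀ x, c 0 + c 1 * x + c 2 * y + c 3 * (x ^ 2 - y ^ 2)
    = (c 0 + c 2 * y - c 3 * y ^ 2) + c 1 * x + c 3 * x ^ 2 from fun x => by ring,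
    integral_quadratic]

theorem integral_rq1_vertical (c : Fin 4 → ℝ) (x a b : ℝ) :
    ∫ y in a..b, rq1 c x y =
      (c 0 + c 1 * x + c 3 * x ^ 2) * (b - a) + c 2 * (b ^ 2 - a ^ 2) / 2
        - c 3 * (b ^ 3 - a ^ 3) / 3 := by
  simp_rw [rq1, show ∀ y, c 0 + c 1 * x + c 2 * y + c 3 * (x ^ 2 - y ^ 2)
    = (c 0 + c 1 * x + c 3 * x ^ 2) + c 2 * y + (-c 3) * y ^ 2 from fun y => by ring,
    integral_quadratic]
  ring

theorem fluxDefect_eq (βm βp d e : ℝ) (cm cp : Fin 4 → ℝ) :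
    fluxDefect βm βp d e cm cp =
      βp * (cp 1 + cp 3 * (d + e)) - βm * (cm 1 + cm 3 * (d + e))
        + (βp * (cp 2 - cp 3) - βm * (cm 2 - cm 3)) * (d - e) := by
  rw [fluxDefect, intervalIntegral.integral_congr (g := fun t =>
      (βp * (cp 1 + 2 * cp 3 * d) - βm * (cm 1 + 2 * cm 3 * d) + (βp * cp 2 - βm * cm 2) * (d - e))
        + (2 * (βp * cp 3 - βm * cm 3) * (e - d) - 2 * (βp * cp 3 - βm * cm 3) * (d - e)) * t
        + 0 * t ^ 2) (fun t _ => by ring), integral_quadratic]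
  ring

theorem dofI_eq (d e : ℝ) (cm cp : Fin 4 → ℝ) :
    dofI d e cm cp =
      ![cm 0 * d + cm 1 * d ^ 2 / 2 + cm 3 * d ^ 3 / 3
          + cp 0 * (1 - d) + cp 1 * (1 - d ^ 2) / 2 + cp 3 * (1 - d ^ 3) / 3,
        cp 0 + cp 1 + cp 2 / 2 + 2 * cp 3 / 3,
        (cm 0 + cm 2 - cm 3) * e + cm 1 * e ^ 2 / 2 + cm 3 * e ^ 3 / 3
          + (cp 0 + cp 2 - cp 3) * (1 - e) + cp 1 * (1 - e ^ 2) / 2 + cp 3 * (1 - e ^ 3) / 3,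
        cm 0 + cm 2 / 2 - cm 3 / 3] := by
  simp only [dofI, integral_rq1_horizontal, integral_rq1_vertical]
  ext i
  fin_cases i <;>
    simp only [Matrix.cons_val_zero, Matrix.cons_val_one, Matrix.cons_val, Fin.zero_eta, Fin.mk_one,
      Fin.reduceFinMk, Fin.isValue] <;> ring

/-- `rq1 (interfaceLine d e) x y = x - d - (e - d) y`, the level-set function of `DE`. -/
def interfaceLine (d e : ℝ) : Fin 4 → ℝ := ![-d, 1, d - e, 0]

theorem exists_eq_add_smul_interfaceLine {d e : ℝ} {cm cp : Fin 4 → ℝ}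
    (h1 : J1 d e cm cp) (h2 : J2 cm cp) : ∃ l : ℝ, cp = cm + l • interfaceLine d e := by
  obtain ⟨hD, hE⟩ := h1
  simp only [rq1, J2] at hD hE h2
  refine ⟨cp 1 - cm 1, ?_⟩
  ext i
  fin_cases i <;>
    simp only [interfaceLine, Pi.add_apply, Pi.smul_apply, smul_eq_mul, Matrix.cons_val_zero,
      Matrix.cons_val_one, Matrix.cons_val, Fin.zero_eta, Fin.mk_one, Fin.reduceFinMk, Fin.isValue]
  · linear_combination -hD + d ^ 2 * h2
  · ring
  · linear_combination hD - hE + (e ^ 2 - 1 - d ^ 2) * h2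
  · linear_combination -h2

def fluxWeight (x y : ℝ) : ℝ :=
  5 * x + 5 * y - 6 * x ^ 2 - 6 * x * y - 6 * y ^ 2 + 5 * x ^ 3 + x ^ 2 * y + x * y ^ 2 + 5 * y ^ 3

theorem fluxWeight_pos {x y : ℝ} (hx : x ∈ Ioo (0 : ℝ) 1) (hy : y ∈ Ioo (0 : ℝ) 1) :
    0 < fluxWeight x y := by
  obtain ⟨hx0, hx1⟩ := hx
  obtain ⟨hy0, hy1⟩ := hy
  unfold fluxWeight
  nlinarith [mul_nonneg hy0.le (sq_nonneg (5 * y - 3)), mul_nonneg hx0.le (sq_nonneg (5 * x - 3)),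
    mul_pos hx0 (sub_pos.2 hy1), mul_pos hy0 (sub_pos.2 hx1),
    mul_nonneg (mul_nonneg hx0.le hy0.le) (add_pos hx0 hy0).le]

theorem four_mul_fluxDefect_of_dofI_eq_zero (βm βp d e l : ℝ) (c : Fin 4 → ℝ)
    (h : dofI d e c (c + l • interfaceLine d e) = 0) :
    4 * fluxDefect βm βp d e c (c + l • interfaceLine d e)
      = l * (βp * fluxWeight d e + βm * fluxWeight (1 - d) (1 - e)) := by
  rw [dofI_eq] at h
  have hB := congrFun h 0
  have hR := congrFun h 1
  have hT := congrFun h 2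
  have hL := congrFun h 3
  rw [fluxDefect_eq, fluxWeight, fluxWeight]
  simp only [interfaceLine, Pi.add_apply, Pi.smul_apply, smul_eq_mul, Pi.zero_apply,
    Matrix.cons_val_zero, Matrix.cons_val_one, Matrix.cons_val] at hB hR hT hL ⊢
  linear_combination (βp - βm) * (4 * (hR - hL) + 6 * (d + e - 1) * (hR + hL - hB - hT)
    + 4 * (d - e) * (hT - hB))

theorem eq_zero_of_dofI_self_eq_zero {d e : ℝ} {c : Fin 4 → ℝ} (h : dofI d e c c = 0) : c = 0 := by
  rw [dofI_eq] at h
  have hB := congrFun h 0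
  have hR := congrFun h 1
  have hT := congrFun h 2
  have hL := congrFun h 3
  simp only [Pi.zero_apply, Matrix.cons_val_zero, Matrix.cons_val_one, Matrix.cons_val]
    at hB hR hT hL
  have h3 : c 3 = 0 := by linear_combination (3 / 2 : ℝ) * (hR + hL - hB - hT)
  have h1 : c 1 = 0 := by linear_combination hR - hL - h3
  have h2 : c 2 = 0 := by linear_combination hT - hB + h3
  have h0 : c 0 = 0 := by linear_combination hL - h2 / 2 + h3 / 3
  ext i
  fin_cases i <;> assumption

theorem eq_zero_of_jump_conditions_of_dofI_eq_zero {βm βp d e : ℝ} (hβm : 0 < βm) (hβp : 0 < βp)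
    (hd : d ∈ Ioo (0 : ℝ) 1) (he : e ∈ Ioo (0 : ℝ) 1) {cm cp : Fin 4 → ℝ}
    (h1 : J1 d e cm cp) (h2 : J2 cm cp) (h3 : J3 βm βp d e cm cp) (h0 : dofI d e cm cp = 0) :
    cm = 0 ∧ cp = 0 := by
  obtain ⟨l, rfl⟩ := exists_eq_add_smul_interfaceLine h1 h2
  have hl : l = 0 := by
    have hflux := four_mul_fluxDefect_of_dofI_eq_zero βm βp d e l cm h0
    rw [show fluxDefect βm βp d e cm _ = 0 from h3, mul_zero, eq_comm] at hflux
    have hd' : 1 - d ∈ Ioo (0 : ℝ) 1 := ⟨by linarith [hd.2], by linarith [hd.1]⟩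
    have he' : 1 - e ∈ Ioo (0 : ℝ) 1 := ⟨by linarith [he.2], by linarith [he.1]⟩
    have hpos := add_pos (mul_pos hβp (fluxWeight_pos hd he)) (mul_pos hβm (fluxWeight_pos hd' he'))
    exact (mul_eq_zero.1 hflux).resolve_right hpos.ne'
  subst hl
  rw [zero_smul, add_zero] at h0 ⊢
  exact ⟨eq_zero_of_dofI_self_eq_zero h0, eq_zero_of_dofI_self_eq_zero h0⟩

def jumpDofMap (βm βp d e : ℝ) : (Fin 4 → ℝ) × (Fin 4 → ℝ) →ₗ[ℝ] (Fin 4 → ℝ) × (Fin 4 → ℝ) where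
  toFun c := (![rq1 c.1 d 0 - rq1 c.2 d 0, rq1 c.1 e 1 - rq1 c.2 e 1, c.1 3 - c.2 3,
    fluxDefect βm βp d e c.1 c.2], dofI d e c.1 c.2)
  map_add' c c' := by
    ext i <;> fin_cases i <;>
      simp only [rq1, fluxDefect_eq, dofI_eq, Prod.fst_add, Prod.snd_add, Pi.add_apply,
        Matrix.cons_val_zero, Matrix.cons_val_one, Matrix.cons_val, Fin.zero_eta, Fin.mk_one,
        Fin.reduceFinMk, Fin.isValue] <;> ring
  map_smul' r c := by
    ext i <;> fin_cases i <;>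
      simp only [rq1, fluxDefect_eq, dofI_eq, Prod.smul_fst, Prod.smul_snd, Prod.smul_mk,
        Pi.smul_apply, smul_eq_mul, RingHom.id_apply, Matrix.cons_val_zero, Matrix.cons_val_one,
        Matrix.cons_val, Fin.zero_eta, Fin.mk_one, Fin.reduceFinMk, Fin.isValue] <;> ring

theorem jumpDofMap_eq_iff (βm βp d e : ℝ) (c : (Fin 4 → ℝ) × (Fin 4 → ℝ)) (v : Fin 4 → ℝ) :
    jumpDofMap βm βp d e c = (0, v) ↔
      J1 d e c.1 c.2 ∧ J2 c.1 c.2 ∧ J3 βm βp d e c.1 c.2 ∧ dofI d e c.1 c.2 = v := by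
  simp [jumpDofMap, J1, J2, J3, Prod.ext_iff, funext_iff, Fin.forall_fin_succ, sub_eq_zero,
    and_assoc]

theorem jumpDofMap_bijective {βm βp d e : ℝ} (hβm : 0 < βm) (hβp : 0 < βp)
    (hd : d ∈ Ioo (0 : ℝ) 1) (he : e ∈ Ioo (0 : ℝ) 1) :
    Function.Bijective (jumpDofMap βm βp d e) := by
  have hinj : Function.Injective (jumpDofMap βm βp d e) := by
    refine (injective_iff_map_eq_zero _).2 fun c hc => ?_
    obtain ⟨h1, h2, h3, h0⟩ := (jumpDofMap_eq_iff βm βp d e c 0).1 hc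
    exact Prod.ext_iff.2 (eq_zero_of_jump_conditions_of_dofI_eq_zero hβm hβp hd he h1 h2 h3 h0)
  exact ⟨hinj, LinearMap.injective_iff_surjective.1 hinj⟩

/-- Unisolvency of the rotated-Q1 IFE with edge-mean degrees of
freedom on a Type II interface element. -/
theorem edge_mean_unisolvency
    (βm βp : ℝ) (hβm : 0 < βm) (hβp : 0 < βp)
    (d e : ℝ) (hd : d ∈ Ioo (0:ℝ) 1) (he : e ∈ Ioo (0:ℝ) 1)
    (v : Fin 4 → ℝ) :
    ∃! c : (Fin 4 → ℝ) × (Fin 4 → ℝ),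
      J1 d e c.1 c.2 ∧ J2 c.1 c.2 ∧ J3 βm βp d e c.1 c.2 ∧
        dofI d e c.1 c.2 = v :=
  (existsUnique_congr (jumpDofMap_eq_iff βm βp d e · v)).1
    ((jumpDofMap_bijective hβm hβp hd he).existsUnique (0, v))
end
end

section
/- Continuity of rotated-Q1 IFE functions across the interface segment: if the coefficient vectors (c⁻, c⁺) satisfy the jump conditions (J1) (p⁻(D) = p⁺(D) and p⁻(E) = p⁺(E)) and (J2) (c₄⁻ = c₄⁺), then p⁻ and p⁺ agree at every point of the segment DE, i.e. p⁻((1−t)d + t e, t) = p⁺((1−t)d + t e, t) for all t ∈ [0,1]; consequently the piecewise rotated-Q1 function φ is continuous on T. -/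
open MeasureTheory Set

noncomputable section

/-- Under (J1) and (J2), the pieces `p⁻`, `p⁺` agree on the whole
segment `DE`, and hence `φ` is continuous on `T = [0,1]²`. -/
theorem ife_continuity
    (d e : ℝ) (hd : d ∈ Ioo (0:ℝ) 1) (he : e ∈ Ioo (0:ℝ) 1)
    (cm cp : Fin 4 → ℝ) (h1 : J1 d e cm cp) (h2 : J2 cm cp) :
    (∀ t ∈ Icc (0:ℝ) 1,
        rq1 cm ((1 - t) * d + t * e) t = rq1 cp ((1 - t) * d + t * e) t) ∧
    ContinuousOn (fun z : ℝ × ℝ => phiFn d e cm cp z.1 z.2)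
      (Icc (0:ℝ) 1 ×ˢ Icc (0:ℝ) 1) := by
  have key : ∀ t : ℝ,
      rq1 cm ((1 - t) * d + t * e) t = rq1 cp ((1 - t) * d + t * e) t := by
    intro t
    have h1a := h1.1
    have h1b := h1.2
    have h2' : cm 3 = cp 3 := h2
    simp only [rq1] at h1a h1b ⊢
    linear_combination (1 - t) * h1a + t * h1b +
      (((1 - t) * d + t * e) ^ 2 - t ^ 2 - (1 - t) * d ^ 2 - t * (e ^ 2 - 1)) * h2'
  constructor
  · intro t _; exact key t
  · have hc : Continuous (fun z : ℝ × ℝ => phiFn d e cm cp z.1 z.2) := by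
      unfold phiFn
      apply Continuous.if
      · intro z hz
        have hz' : z.1 = d + (e - d) * z.2 := by
          have := frontier_le_subset_eq (continuous_fst)
            (by continuity : Continuous fun z : ℝ × ℝ => d + (e - d) * z.2) hz
          exact this
        have hx : z.1 = (1 - z.2) * d + z.2 * e := by rw [hz']; ring
        rw [hx]
        exact key z.2
      · exact Continuous.add (by continuity) (by continuity)
      · exact Continuous.add (by continuity) (by continuity)
    exact hc.continuousOn

end
end

section
/- Weak flux continuity across any interface curve joining D to E: suppose the coefficient vectors (c⁻, c⁺) satisfy the flux jump condition (J3), and let F : ℝ² → ℝ² be the vector field F = β⁺∇p⁺ − β⁻∇p⁻, i.e. F(x,y) = (β⁺(c₂⁺ + 2c₄⁺x) − β⁻(c₂⁻ + 2c₄⁻x), β⁺(c₃⁺ − 2c₄⁺y) − β⁻(c₃⁻ − 2c₄⁻y)). Then for every continuously differentiable path γ = (γ₁, γ₂) : [0,1] → ℝ² with γ(0) = D and γ(1) = E, the flux of F across γ vanishes: ∫₀¹ F(γ(t)) · (γ₂′(t), −γ₁′(t)) dt = 0. (This expresses that the IFE function satisfies the flux jump condition weakly on the actual interface curve Γ ∩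 T, not only on the segment DE.) -/
/-! Each piece `pˢ` is harmonic, so `F = β⁺∇p⁺ − β⁻∇p⁻` is divergence free and has a stream
function `ψ = β⁺q⁺ − β⁻q⁻` (`qˢ` a harmonic conjugate of `pˢ`) with `∇ψ = (−F₂, F₁)`. The flux
of `F` across any C¹ path from `D` to `E` is therefore `ψ(E) − ψ(D)`, independent of the path;
(J3) says that the flux across the straight segment `DE` vanishes. -/

open MeasureTheory Set

noncomputable section

/-- The jump vector field `F = β⁺∇p⁺ − β⁻∇p⁻`. -/
def fluxField (βm βp : ℝ) (cm cp : Fin 4 → ℝ) (x y : ℝ) : ℝ × ℝ :=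
  (βp * (cp 1 + 2 * cp 3 * x) - βm * (cm 1 + 2 * cm 3 * x),
   βp * (cp 2 - 2 * cp 3 * y) - βm * (cm 2 - 2 * cm 3 * y))

/-- `rq1 c + i · rq1Conj c = c₀ + (c₁ − i c₂) z + c₃ z²` with `z = x + i y`. -/
def rq1Conj (c : Fin 4 → ℝ) (x y : ℝ) : ℝ :=
  c 1 * y - c 2 * x + 2 * c 3 * x * y

theorem HasDerivAt.rq1Conj (c : Fin 4 → ℝ) {γ₁ γ₂ : ℝ → ℝ} {g₁ g₂ t : ℝ}
    (hγ₁ : HasDerivAt γ₁ g₁ t) (hγ₂ : HasDerivAt γ₂ g₂ t) :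
    HasDerivAt (fun s => rq1Conj c (γ₁ s) (γ₂ s))
      (rq1D c 1 0 (γ₁ t) (γ₂ t) * g₂ - rq1D c 0 1 (γ₁ t) (γ₂ t) * g₁) t := by
  have h := ((hγ₂.const_mul (c 1)).sub (hγ₁.const_mul (c 2))).add
    ((hγ₁.const_mul (2 * c 3)).mul hγ₂)
  exact h.congr_deriv (by simp only [rq1D]; ring)

section Stream

variable (βm βp : ℝ) (cm cp : Fin 4 → ℝ)

def fluxStream (x y : ℝ) : ℝ :=
  βp * rq1Conj cp x y - βm * rq1Conj cm x y

theorem integral_fluxField_eq_fluxStream_sub (γ₁ γ₂ g₁ g₂ : ℝ → ℝ)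
    (hγ₁ : ∀ t ∈ Icc (0:ℝ) 1, HasDerivAt γ₁ (g₁ t) t)
    (hγ₂ : ∀ t ∈ Icc (0:ℝ) 1, HasDerivAt γ₂ (g₂ t) t)
    (hg₁ : ContinuousOn g₁ (Icc (0:ℝ) 1)) (hg₂ : ContinuousOn g₂ (Icc (0:ℝ) 1)) :
    ∫ t in (0:ℝ)..1,
        ((fluxField βm βp cm cp (γ₁ t) (γ₂ t)).1 * g₂ t
          - (fluxField βm βp cm cp (γ₁ t) (γ₂ t)).2 * g₁ t)
      = fluxStream βm βp cm cp (γ₁ 1) (γ₂ 1) - fluxStream βm βp cm cp (γ₁ 0) (γ₂ 0) := by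
  rw [← uIcc_of_le zero_le_one] at hγ₁ hγ₂ hg₁ hg₂
  apply intervalIntegral.integral_eq_sub_of_hasDerivAt
    (f := fun t => fluxStream βm βp cm cp (γ₁ t) (γ₂ t))
  · intro t ht
    have hp := (hγ₁ t ht).rq1Conj cp (hγ₂ t ht)
    have hm := (hγ₁ t ht).rq1Conj cm (hγ₂ t ht)
    exact ((hp.const_mul βp).sub (hm.const_mul βm)).congr_deriv
      (by simp only [fluxField, rq1D]; ring)
  · have hc₁ : ContinuousOn γ₁ (uIcc 0 1) := fun t ht =>
      (hγ₁ t ht).continuousAt.continuousWithinAt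
    have hc₂ : ContinuousOn γ₂ (uIcc 0 1) := fun t ht =>
      (hγ₂ t ht).continuousAt.continuousWithinAt
    apply ContinuousOn.intervalIntegrable
    simp only [fluxField]
    fun_prop

theorem fluxDefect_eq_fluxStream_sub (d e : ℝ) :
    fluxDefect βm βp d e cm cp = fluxStream βm βp cm cp e 1 - fluxStream βm βp cm cp d 0 := by
  have hline (t : ℝ) : HasDerivAt (fun s => (1 - s) * d + s * e) (e - d) t :=
    ((((hasDerivAt_id t).const_sub 1).mul_const d).add
      ((hasDerivAt_id t).mul_const e)).congr_deriv (by ring)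
  have hseg := integral_fluxField_eq_fluxStream_sub βm βp cm cp _ id _ (fun _ => 1)
    (fun t _ => hline t) (fun t _ => hasDerivAt_id t) continuousOn_const continuousOn_const
  simp only [id, sub_self, sub_zero, zero_mul, one_mul, add_zero, zero_add] at hseg
  rw [← hseg, fluxDefect]
  refine intervalIntegral.integral_congr fun t _ => ?_
  simp only [fluxField]
  ring

end Stream

theorem ife_weak_flux_continuity_general
    (βm βp : ℝ)
    (d e : ℝ)
    (cm cp : Fin 4 → ℝ) (h3 : J3 βm βp d e cm cp)
    (γ₁ γ₂ g₁ g₂ : ℝ → ℝ)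
    (hγ₁ : ∀ t ∈ Icc (0:ℝ) 1, HasDerivAt γ₁ (g₁ t) t)
    (hγ₂ : ∀ t ∈ Icc (0:ℝ) 1, HasDerivAt γ₂ (g₂ t) t)
    (hg₁ : ContinuousOn g₁ (Icc (0:ℝ) 1)) (hg₂ : ContinuousOn g₂ (Icc (0:ℝ) 1))
    (hD : γ₁ 0 = d ∧ γ₂ 0 = 0) (hE : γ₁ 1 = e ∧ γ₂ 1 = 1) :
    ∫ t in (0:ℝ)..1,
        ((fluxField βm βp cm cp (γ₁ t) (γ₂ t)).1 * g₂ t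
          - (fluxField βm βp cm cp (γ₁ t) (γ₂ t)).2 * g₁ t) = 0 := by
  rw [integral_fluxField_eq_fluxStream_sub βm βp cm cp γ₁ γ₂ g₁ g₂ hγ₁ hγ₂ hg₁ hg₂,
    hD.1, hD.2, hE.1, hE.2, ← fluxDefect_eq_fluxStream_sub]
  exact h3

/-- Weak flux continuity across any C¹ interface curve joining
`D = (d,0)` to `E = (e,1)`: if (J3) holds, the flux of `F = β⁺∇p⁺ − β⁻∇p⁻` across
every continuously differentiable path from `D` to `E` vanishes. -/
theorem ife_weak_flux_continuity
    (βm βp : ℝ) (hβm : 0 < βm) (hβp : 0 < βp)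
    (d e : ℝ) (hd : d ∈ Ioo (0:ℝ) 1) (he : e ∈ Ioo (0:ℝ) 1)
    (cm cp : Fin 4 → ℝ) (h3 : J3 βm βp d e cm cp)
    (γ₁ γ₂ g₁ g₂ : ℝ → ℝ)
    (hγ₁ : ∀ t ∈ Icc (0:ℝ) 1, HasDerivAt γ₁ (g₁ t) t)
    (hγ₂ : ∀ t ∈ Icc (0:ℝ) 1, HasDerivAt γ₂ (g₂ t) t)
    (hg₁ : ContinuousOn g₁ (Icc (0:ℝ) 1)) (hg₂ : ContinuousOn g₂ (Icc (0:ℝ) 1))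
    (hD : γ₁ 0 = d ∧ γ₂ 0 = 0) (hE : γ₁ 1 = e ∧ γ₂ 1 = 1) :
    ∫ t in (0:ℝ)..1,
        ((fluxField βm βp cm cp (γ₁ t) (γ₂ t)).1 * g₂ t
          - (fluxField βm βp cm cp (γ₁ t) (γ₂ t)).2 * g₁ t) = 0 :=
  ife_weak_flux_continuity_general βm βp d e cm cp h3 γ₁ γ₂ g₁ g₂ hγ₁ hγ₂ hg₁ hg₂ hD hE

end
end
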